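/- If p ≡ 1 (mod 8) and d = 4, then (17p² - 18p + 1)/64 ≤ V_4(p) ≤ (21p² + 24p^{3/2} + 18p + 1)/64. -/

import Mathlib

/-!
Let χ be the quartic character with χ(g) = i. Finite Fourier inversion over the four cosets of
the fourth powers gives `4 η_a = -1 + (-i)^a G(χ) + (-1)^a G(χ²) + i^a G(χ⁻¹)` in terms of Gauss
sums. Since p ≡ 1 (mod 8), χ(-1) = 1; hence the periods are real, `G(χ) G(χ⁻¹) = G(χ²)² = p`,
and `G(χ)² = G(χ²) J`, `G(χ⁻¹)² = G(χ²) J̄` for the Jacobi sum `J = J(χ, χ)`, with `|J|² = p`.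
Eliminating the Gauss sums leaves `64 V₄(p) = 17p² + 4p(a² - 6a) + 18p + 1` with `a = Re J`,
and `a² ≤ p` (the Weil bound, here exact) gives `-9 ≤ a² - 6a ≤ p + 6√p`.
-/

open Finset Complex

theorem sum_eq_sum_range_orderOf_pow {G M : Type*} [Group G] [Fintype G] [AddCommMonoid M]
    {g : G} (hg : ∀ x, x ∈ Subgroup.zpowers g) (f : G → M) :
    ∑ x, f x = ∑ n ∈ range (orderOf g), f (g ^ n) := by
  classical
  rw [← IsCyclic.image_range_orderOf hg, sum_image]
  intro m hm n hn h
  exact pow_injOn_Iio_orderOf (by simpa using hm) (by simpa using hn) h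

theorem sum_eq_sum_units_of_map_zero {G₀ M : Type*} [GroupWithZero G₀] [Fintype G₀]
    [DecidableEq G₀] [AddCommMonoid M] {f : G₀ → M} (hf : f 0 = 0) :
    ∑ x, f x = ∑ u : G₀ˣ, f u := by
  rw [← sum_filter_of_ne (p := fun x => x ≠ 0) fun x _ hx h => hx (h ▸ hf),
    sum_subtype (p := fun x => x ≠ 0) _ fun x => by simp]
  exact (Fintype.sum_equiv unitsEquivNeZero _ _ fun _ => rfl).symm

theorem sum_range_mul_eq_sum_sum {M : Type*} [AddCommMonoid M] (f : ℕ → M) (d k : ℕ) :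
    ∑ n ∈ range (d * k), f n = ∑ j ∈ range k, ∑ b ∈ range d, f (d * j + b) := by
  induction k with
  | zero => simp
  | succ k ih => rw [mul_add_one, sum_range_add, ih, sum_range_succ]

theorem IsPrimitiveRoot.sum_inv_pow_mul_pow_pow {R : Type*} [Field R] {ζ : R} {d a b : ℕ}
    (hζ : IsPrimitiveRoot ζ d) (ha : a < d) (hb : b < d) :
    ∑ t ∈ range d, ((ζ ^ a)⁻¹ * ζ ^ b) ^ t = if b = a then (d : R) else 0 := by
  have hζa : ζ ^ a ≠ 0 := pow_ne_zero _ (hζ.ne_zero (by omega))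
  split_ifs with hab
  · simp [hab, hζa]
  · have hne : (ζ ^ a)⁻¹ * ζ ^ b ≠ 1 := fun h =>
      hab (hζ.pow_inj hb ha ((inv_mul_eq_one₀ hζa).mp h).symm)
    rw [geom_sum_eq hne, mul_pow, inv_pow, ← pow_mul, ← pow_mul, mul_comm a, mul_comm b,
      pow_mul, pow_mul, hζ.pow_eq_one]
    simp

theorem FiniteField.pow_card_div_two_eq_neg_one {F : Type*} [Field F] [Fintype F]
    (hF : ringChar F ≠ 2) {g : Fˣ} (hg : ∀ x, x ∈ Subgroup.zpowers g) :
    (g : F) ^ (Fintype.card F / 2) = -1 := by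
  classical
  refine (pow_dichotomy hF g.ne_zero).resolve_left fun h => ?_
  have hord : orderOf g = Fintype.card F - 1 := by
    rw [orderOf_eq_card_of_forall_mem_zpowers hg, Nat.card_eq_fintype_card, Fintype.card_units]
  have hodd := FiniteField.odd_card_of_char_ne_two hF
  have htwo := Fintype.one_lt_card (α := F)
  refine pow_ne_one_of_lt_orderOf (x := g) ?_ ?_ (Units.ext (by simpa using h))
  · omega
  · rw [hord]; omega

theorem MulChar.exists_apply_eq_of_pow_eq_one {F R : Type*} [Field F] [Fintype F]
    [CommMonoidWithZero R] {g : Fˣ} (hg : ∀ x, x ∈ Subgroup.zpowers g) {ζ : R}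
    (hζ : ζ ^ (Fintype.card F - 1) = 1) : ∃ χ : MulChar F R, χ g = ζ := by
  classical
  have hcard : Fintype.card F - 1 ≠ 0 := by have := Fintype.one_lt_card (α := F); omega
  let u := (IsUnit.of_pow_eq_one hζ hcard).unit
  have hu : u ∈ rootsOfUnity (Fintype.card Fˣ) R := by
    rw [_root_.mem_rootsOfUnity, Fintype.card_units]
    exact Units.ext hζ
  exact ⟨ofRootOfUnity hu hg, by rw [ofRootOfUnity_spec]; rfl⟩

section GaussianPeriod

variable {F R : Type*} [Field F] [Fintype F]

def gaussianPeriod [CommRing R] (ψ : AddChar F R) (g : Fˣ) (d a : ℕ) : R :=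
  ∑ j ∈ range ((Fintype.card F - 1) / d), ψ (g ^ (d * j + a))

theorem mul_gaussianPeriod_eq_sum_gaussSum [Field R] {χ : MulChar F R} {ψ : AddChar F R}
    {g : Fˣ} (hg : ∀ x, x ∈ Subgroup.zpowers g) {d k a : ℕ}
    (hk : Fintype.card F - 1 = d * k) (ha : a < d) {ζ : R} (hζ : IsPrimitiveRoot ζ d)
    (hχ : χ g = ζ) :
    d * gaussianPeriod ψ g d a = ∑ t ∈ range d, (ζ ^ a)⁻¹ ^ t * gaussSum (χ ^ t) ψ := by
  classical
  have hord : orderOf g = d * k := by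
    rw [orderOf_eq_card_of_forall_mem_zpowers hg, Nat.card_eq_fintype_card, Fintype.card_units, hk]
  have hgaussSum (t : ℕ) : gaussSum (χ ^ t) ψ =
      ∑ j ∈ range k, ∑ b ∈ range d, (ζ ^ b) ^ t * ψ (g ^ (d * j + b)) := by
    rw [gaussSum, sum_eq_sum_units_of_map_zero (by rw [MulChar.map_zero, zero_mul]),
      sum_eq_sum_range_orderOf_pow hg, hord, sum_range_mul_eq_sum_sum]
    refine sum_congr rfl fun j _ => sum_congr rfl fun b _ => ?_
    rw [MulChar.pow_apply_coe, Units.val_pow_eq_pow_val, map_pow, hχ, pow_add, pow_mul,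
      hζ.pow_eq_one, one_pow, one_mul]
  have hperiod : gaussianPeriod ψ g d a = ∑ j ∈ range k, ψ (g ^ (d * j + a)) := by
    rw [gaussianPeriod, hk, Nat.mul_div_cancel_left _ (by omega)]
  simp_rw [hgaussSum, mul_sum, ← mul_assoc, ← mul_pow]
  rw [sum_comm, hperiod, mul_sum]
  refine sum_congr rfl fun j _ => ?_
  rw [sum_comm]
  simp_rw [← sum_mul]
  rw [sum_congr rfl fun b hb => by rw [hζ.sum_inv_pow_mul_pow_pow ha (mem_range.mp hb)]]
  simp [ha]

end GaussianPeriod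

section GaussJacobi

variable {F : Type*} [Field F] [Fintype F] {χ : MulChar F ℂ} {ψ : AddChar F ℂ}

theorem star_gaussSum_of_apply_neg_one (h : χ (-1) = 1) :
    star (gaussSum χ ψ) = gaussSum χ⁻¹ ψ := by
  rw [star_gaussSum_eq, ← mul_gaussSum_inv_eq_gaussSum χ⁻¹ ψ, MulChar.inv_apply', inv_neg_one, h,
    one_mul]

theorem gaussSum_mul_gaussSum_inv_of_apply_neg_one (hχ : χ ≠ 1) (hψ : ψ.IsPrimitive)
    (h : χ (-1) = 1) : gaussSum χ ψ * gaussSum χ⁻¹ ψ = Fintype.card F := by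
  rw [← mul_gaussSum_inv_eq_gaussSum χ⁻¹ ψ, MulChar.inv_apply', inv_neg_one, h, one_mul,
    gaussSum_mul_gaussSum_eq_card hχ hψ]

theorem star_jacobiSum (χ φ : MulChar F ℂ) : star (jacobiSum χ φ) = jacobiSum χ⁻¹ φ⁻¹ := by
  simp only [jacobiSum, star_sum, star_mul', MulChar.star_apply']

theorem gaussSum_pow_two_sq_eq_card (hψ : ψ.IsPrimitive) (hχ₂ : χ ^ 2 ≠ 1)
    (hχ₄ : χ ^ 4 = 1) (h : χ (-1) = 1) : gaussSum (χ ^ 2) ψ ^ 2 = Fintype.card F := by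
  have hquad : (χ ^ 2).IsQuadratic := MulChar.isQuadratic_iff_sq_eq_one.mpr (by rw [← pow_mul, hχ₄])
  rw [gaussSum_sq hχ₂ hquad hψ, MulChar.pow_apply' _ two_ne_zero, h, one_pow, one_mul]

theorem gaussSum_inv_sq_eq_mul_star_jacobiSum (hχ₂ : χ ^ 2 ≠ 1) (hχ₄ : χ ^ 4 = 1) :
    gaussSum χ⁻¹ ψ ^ 2 = gaussSum (χ ^ 2) ψ * star (jacobiSum χ χ) := by
  have hsq : χ⁻¹ * χ⁻¹ = χ ^ 2 := by
    rw [← mul_inv, ← sq, inv_eq_of_mul_eq_one_right (b := χ ^ 2) (by rw [← pow_add]; exact hχ₄)]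
  rw [star_jacobiSum, ← hsq, jacobiSum_mul_nontrivial (hsq ▸ hχ₂), sq]

theorem jacobiSum_mul_star_jacobiSum (hχ₂ : χ ^ 2 ≠ 1) :
    jacobiSum χ χ * star (jacobiSum χ χ) = Fintype.card F := by
  have hχ₁ : χ ≠ 1 := fun h => hχ₂ (by rw [h, one_pow])
  rw [star_jacobiSum]
  refine jacobiSum_mul_jacobiSum_inv ?_ hχ₁ hχ₁ (by rwa [← sq])
  rw [ringChar.eq_zero]
  exact (CharP.ringChar_ne_zero_of_finite F).symm

end GaussJacobi

theorem ofReal_norm_pow_four_of_star_eq {z : ℂ} (h : star z = z) : (‖z‖ : ℂ) ^ 4 = z ^ 4 := by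
  rw [show (‖z‖ : ℂ) ^ 4 = ((‖z‖ ^ 2 : ℝ) : ℂ) ^ 2 by push_cast; ring, Complex.sq_norm, ← mul_conj,
    ← star_def, h, ← sq, ← pow_mul]

theorem star_quartic_combination {G₁ G₂ G₃ : ℂ} (h₁ : star G₁ = G₃) (h₂ : star G₂ = G₂) (a : ℕ) :
    star (-1 + (-I) ^ a * G₁ + (-1) ^ a * G₂ + I ^ a * G₃)
      = -1 + (-I) ^ a * G₁ + (-1) ^ a * G₂ + I ^ a * G₃ := by
  have h₃ : star G₃ = G₁ := by rw [← h₁, star_star]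
  have hI : star I = -I := conj_I
  simp only [star_add, star_mul', star_pow, star_neg, star_one, hI, neg_neg, h₁, h₂, h₃]
  ring

theorem sum_quartic_combination_pow_four {G₁ G₂ G₃ J J' q : ℂ} (h₁₃ : G₁ * G₃ = q) (h₂ : G₂ ^ 2 = q)
    (h₁ : G₁ ^ 2 = G₂ * J) (h₃ : G₃ ^ 2 = G₂ * J') (hJ : J * J' = q) :
    ∑ a ∈ range 4, (-1 + (-I) ^ a * G₁ + (-1) ^ a * G₂ + I ^ a * G₃) ^ 4
      = 4 * (17 * q ^ 2 + q * (J + J') ^ 2 - 12 * q * (J + J') + 18 * q + 1) := by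
  simp only [sum_range_succ, sum_range_zero]
  norm_num [neg_pow, I_pow_three]
  linear_combination (24*G₁*G₃ + 48*G₂^2 + 24*q + 48) * h₁₃
      + (4*J^2 + 4*J'^2 + 4*G₂^2 + 52*q - 48*J - 48*J' + 24) * h₂
      + (4*G₁^2 + 4*G₂*J - 48*G₂) * h₁
      + (4*G₃^2 + 4*G₂*J' - 48*G₂) * h₃
      + (-8*q) * hJ
      + (12*(1+G₂)^2*(G₁-G₃)^2 + 2*(G₁-G₃)^4*(I^2-1)) * I_sq

section QuarticCharacter

variable {M : Type*} [CommMonoid M] {χ : MulChar M ℂ} {g : Mˣ}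

theorem MulChar.pow_four_eq_one_of_apply_eq_I (hg : ∀ x, x ∈ Subgroup.zpowers g)
    (hχ : χ g = I) : χ ^ 4 = 1 := by
  rw [MulChar.eq_iff hg, MulChar.pow_apply_coe, hχ, I_pow_four, MulChar.one_apply_coe]

theorem MulChar.sq_ne_one_of_apply_eq_I (hχ : χ g = I) : χ ^ 2 ≠ 1 := fun h => by
  have := congrArg (· (g : M)) h
  norm_num [MulChar.pow_apply_coe, hχ] at this

end QuarticCharacter

section QuarticPeriods

variable {F : Type*} [Field F] [Fintype F] {χ : MulChar F ℂ} {ψ : AddChar F ℂ} {g : Fˣ}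

theorem MulChar.apply_neg_one_eq_one_of_apply_eq_I (hg : ∀ x, x ∈ Subgroup.zpowers g)
    (hq : Fintype.card F % 8 = 1) (hχ : χ g = I) : χ (-1) = 1 := by
  have hF : ringChar F ≠ 2 := by rw [Ne, FiniteField.even_card_iff_char_two]; omega
  rw [← FiniteField.pow_card_div_two_eq_neg_one hF hg, map_pow, hχ, I_pow_eq_pow_mod,
    show Fintype.card F / 2 % 4 = 0 by omega, pow_zero]

theorem four_mul_gaussianPeriod_four (hg : ∀ x, x ∈ Subgroup.zpowers g)
    (h4 : 4 ∣ Fintype.card F - 1) (hψ : ψ ≠ 1) (hχ : χ g = I) {a : ℕ} (ha : a < 4) :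
    4 * gaussianPeriod ψ g 4 a = -1 + (-I) ^ a * gaussSum χ ψ + (-1) ^ a * gaussSum (χ ^ 2) ψ
      + I ^ a * gaussSum χ⁻¹ ψ := by
  obtain ⟨k, hk⟩ := h4
  have hχ3 : χ ^ 3 = χ⁻¹ :=
    eq_inv_of_mul_eq_one_left (by rw [← pow_succ, MulChar.pow_four_eq_one_of_apply_eq_I hg hχ])
  have hI₁ : (I ^ a)⁻¹ = (-I) ^ a := by rw [← inv_pow, inv_I]
  have hI₂ : ((-I) ^ a) ^ 2 = (-1) ^ a := by rw [← pow_mul, mul_comm, pow_mul, neg_sq, I_sq]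
  have hI₃ : ((-I) ^ a) ^ 3 = I ^ a := by
    rw [← pow_mul, mul_comm, pow_mul, neg_pow, I_pow_three]
    norm_num
  have hinv := mul_gaussianPeriod_eq_sum_gaussSum (ψ := ψ) hg hk ha isPrimitiveRoot_I hχ
  rw [Nat.cast_ofNat] at hinv
  rw [hinv]
  simp only [sum_range_succ, sum_range_zero, zero_add, pow_zero, pow_one, one_mul, hI₁, hI₂, hI₃,
    hχ3, gaussSum_one_left hψ]

theorem star_gaussianPeriod_four (hg : ∀ x, x ∈ Subgroup.zpowers g)
    (hq : Fintype.card F % 8 = 1) (hψ : ψ ≠ 1) (hχ : χ g = I) {a : ℕ} (ha : a < 4) :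
    star (gaussianPeriod ψ g 4 a) = gaussianPeriod ψ g 4 a := by
  have hχneg := MulChar.apply_neg_one_eq_one_of_apply_eq_I hg hq hχ
  have hG₂ : star (gaussSum (χ ^ 2) ψ) = gaussSum (χ ^ 2) ψ := by
    rw [star_gaussSum_of_apply_neg_one (by rw [MulChar.pow_apply' _ two_ne_zero, hχneg, one_pow]),
      inv_eq_of_mul_eq_one_right (b := χ ^ 2)
        (by rw [← pow_add]; exact MulChar.pow_four_eq_one_of_apply_eq_I hg hχ)]
  have h := star_quartic_combination (star_gaussSum_of_apply_neg_one (ψ := ψ) hχneg) hG₂ a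
  rw [← four_mul_gaussianPeriod_four hg (by omega) hψ hχ ha, star_mul',
    show star (4 : ℂ) = 4 by simp] at h
  exact mul_left_cancel₀ (by norm_num) h

theorem sum_four_mul_gaussianPeriod_four_pow_four (hg : ∀ x, x ∈ Subgroup.zpowers g)
    (hq : Fintype.card F % 8 = 1) (hψ : ψ ≠ 1) (hχ : χ g = I) :
    ∑ a ∈ range 4, (4 * gaussianPeriod ψ g 4 a) ^ 4 = 4 * (17 * (Fintype.card F : ℂ) ^ 2
      + Fintype.card F * (jacobiSum χ χ + star (jacobiSum χ χ)) ^ 2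
      - 12 * Fintype.card F * (jacobiSum χ χ + star (jacobiSum χ χ))
      + 18 * Fintype.card F + 1) := by
  have hχ₄ := MulChar.pow_four_eq_one_of_apply_eq_I hg hχ
  have hχ₂ := MulChar.sq_ne_one_of_apply_eq_I hχ
  have hχneg := MulChar.apply_neg_one_eq_one_of_apply_eq_I hg hq hχ
  have hprim := AddChar.IsPrimitive.of_ne_one hψ
  rw [sum_congr rfl fun a ha => by rw [four_mul_gaussianPeriod_four hg (by omega) hψ hχ
    (mem_range.mp ha)]]
  exact sum_quartic_combination_pow_four
    (gaussSum_mul_gaussSum_inv_of_apply_neg_one (fun h => hχ₂ (by rw [h, one_pow])) hprim hχneg)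
    (gaussSum_pow_two_sq_eq_card hprim hχ₂ hχ₄ hχneg)
    (by rw [sq, ← jacobiSum_mul_nontrivial (by rwa [← sq]), sq])
    (gaussSum_inv_sq_eq_mul_star_jacobiSum hχ₂ hχ₄) (jacobiSum_mul_star_jacobiSum hχ₂)

theorem exists_sum_norm_gaussianPeriod_four_pow_four (hg : ∀ x, x ∈ Subgroup.zpowers g)
    (hq : Fintype.card F % 8 = 1) (hψ : ψ ≠ 1) :
    ∃ J : ℂ, normSq J = Fintype.card F ∧
      64 * ∑ a ∈ range 4, ‖gaussianPeriod ψ g 4 a‖ ^ 4 = 17 * (Fintype.card F : ℝ) ^ 2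
        + 4 * Fintype.card F * (J.re ^ 2 - 6 * J.re) + 18 * Fintype.card F + 1 := by
  obtain ⟨χ, hχ⟩ := MulChar.exists_apply_eq_of_pow_eq_one hg (ζ := I) <| by
    obtain ⟨k, hk⟩ : 4 ∣ Fintype.card F - 1 := by omega
    rw [hk, pow_mul, I_pow_four, one_pow]
  have hsum := sum_four_mul_gaussianPeriod_four_pow_four (ψ := ψ) hg hq hψ hχ
  have hJ := jacobiSum_mul_star_jacobiSum (MulChar.sq_ne_one_of_apply_eq_I hχ)
  refine ⟨jacobiSum χ χ, by exact_mod_cast (mul_conj _).symm.trans hJ, ofReal_injective ?_⟩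
  push_cast
  rw [sum_congr rfl fun a ha => ofReal_norm_pow_four_of_star_eq
    (star_gaussianPeriod_four hg hq hψ hχ (mem_range.mp ha))]
  rw [show jacobiSum χ χ + star (jacobiSum χ χ) = (2 * (jacobiSum χ χ).re : ℝ) from add_conj _]
    at hsum
  simp only [mul_pow, ← mul_sum] at hsum
  push_cast at hsum
  linear_combination hsum / 4

end QuarticPeriods

/-- If `p ≡ 1 (mod 8)` and `d = 4`, then
`(17p² - 18p + 1)/64 ≤ V₄(p) ≤ (21p² + 24p^{3/2} + 18p + 1)/64`. -/
theorem gaussian_periods_V4_d4_p1mod8_bounds (p k : ℕ) (hp : p.Prime)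
    (hmod : p % 8 = 1) (hk : p - 1 = 4 * k)
    (g : (ZMod p)ˣ) (hg : ∀ x : (ZMod p)ˣ, x ∈ Subgroup.zpowers g)
    (η : ℕ → ℂ)
    (hη : ∀ a : ℕ, η a = ∑ j ∈ Finset.range k,
      Complex.exp (2 * (Real.pi : ℂ) * Complex.I *
        (((g ^ (4 * j + a) : (ZMod p)ˣ) : ZMod p).val : ℂ) / (p : ℂ))) :
    (17 * (p : ℝ) ^ 2 - 18 * p + 1) / 64
      ≤ ∑ s ∈ Finset.range 4, ‖η s‖ ^ 4 ∧
    ∑ s ∈ Finset.range 4, ‖η s‖ ^ 4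
      ≤ (21 * (p : ℝ) ^ 2 + 24 * (p : ℝ) ^ ((3 : ℝ) / 2) + 18 * p + 1) / 64 := by
  have : Fact p.Prime := ⟨hp⟩
  have hψ : (ZMod.stdAddChar : AddChar (ZMod p) ℂ) ≠ 1 := fun h => by
    simpa [h] using ZMod.isPrimitive_stdAddChar p one_ne_zero
  have hperiod (a : ℕ) : η a = gaussianPeriod ZMod.stdAddChar g 4 a := by
    rw [hη, gaussianPeriod, ZMod.card, hk, Nat.mul_div_cancel_left k four_pos]
    simp only [ZMod.stdAddChar_apply, ZMod.toCircle_apply, Units.val_pow_eq_pow_val]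
  obtain ⟨J, hJ, hsum⟩ := exists_sum_norm_gaussianPeriod_four_pow_four hg (by rwa [ZMod.card]) hψ
  rw [ZMod.card] at hJ hsum
  simp only [hperiod]
  have hre : J.re ^ 2 ≤ p := by rw [sq, ← hJ]; exact re_sq_le_normSq J
  have hsqrt : (p : ℝ) ^ ((3 : ℝ) / 2) = p * √p := by
    rw [show (3 : ℝ) / 2 = 1 + 1 / 2 by norm_num, Real.rpow_add (by exact_mod_cast hp.pos),
      Real.rpow_one, Real.sqrt_eq_rpow]
  have hneg : -J.re ≤ √p := (neg_le_abs _).trans (Real.abs_le_sqrt hre)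
  have hp0 : (0 : ℝ) ≤ p := by positivity
  constructor
  · nlinarith [mul_nonneg hp0 (sq_nonneg (J.re - 3))]
  · rw [hsqrt]
    nlinarith [mul_le_mul_of_nonneg_left hre hp0, mul_le_mul_of_nonneg_left hneg hp0]
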